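/- Let J be a compact subset of ℝ \ {0}, f continuous on [0,1], and φ(y,α) := -2α/(1-y)^2 + 2α/(1-y) - (2/α)·log(1-y). Define ψ(y,α) := (e^{iφ(y,α)}/(1-y)) · ∫_y^1 e^{-iφ(x,α)} f(x) dx for (y,α) in [0,1)×J. Then ψ extends to a continuous function on [0,1]×J, with ψ(1,α) = 0. -/

import Mathlib

/-!
Away from `y = 1` the claim is plain continuity: `φ` is continuous for `y ≠ 1, α ≠ 0`, and
`∫_y^1 e^{-iφ(x,α)} f(x) dx` is continuous in `(y, α)` by dominated convergence, the integrand
having modulus `|f|`. Near `(1, α₀)` split `f = f(1) + (f - f(1))`. After division by `1 - y`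
the second part is at most `sup_{[y,1]} |f - f(1)|`. For the first, `φ'(x) ≈ -4α/(1-x)^3`, so
an integration by parts gives `|∫_y^1 e^{-iφ(x,α)} dx| = O((1-y)^3)` uniformly for `α` near
`α₀ ≠ 0`, and this part is `O((1-y)^2)`.
-/

open Complex

noncomputable def phase (y α : ℝ) : ℝ :=
  -2 * α / (1 - y) ^ 2 + 2 * α / (1 - y) - 2 / α * Real.log (1 - y)

open Set Filter Topology intervalIntegral MeasureTheory

theorem norm_cexp_neg_I_mul_ofReal (r : ℝ) : ‖cexp (-I * r)‖ = 1 := by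
  simp [norm_exp]

/-- A first-derivative test: `e^{-iφ} = (i/φ') (e^{-iφ})'`, integrated by parts. -/
theorem norm_integral_cexp_neg_I_mul_le {φ φ' φ'' : ℝ → ℝ} {a b U V : ℝ} (hab : a ≤ b)
    (hφ : ∀ x ∈ Icc a b, HasDerivAt φ (φ' x) x)
    (hφ' : ∀ x ∈ Icc a b, HasDerivAt φ' (φ'' x) x) (hφ'' : ContinuousOn φ'' (Icc a b))
    (hne : ∀ x ∈ Icc a b, φ' x ≠ 0) (hU : ∀ x ∈ Icc a b, |φ' x|⁻¹ ≤ U)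
    (hV : ∀ x ∈ Icc a b, |φ'' x| / φ' x ^ 2 ≤ V) :
    ‖∫ x in a..b, cexp (-I * φ x)‖ ≤ 2 * U + V * (b - a) := by
  rw [← uIcc_of_le hab] at hφ hφ' hφ'' hne hU hV
  set w : ℝ → ℂ := fun x => cexp (-I * φ x)
  have hne' : ∀ x ∈ uIcc a b, (φ' x : ℂ) ≠ 0 := fun x hx => ofReal_ne_zero.mpr (hne x hx)
  have hw : ∀ x ∈ uIcc a b, HasDerivAt w (-I * φ' x * w x) x := fun x hx => by
    simpa [w, mul_comm, mul_left_comm, mul_assoc] using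
      (((hφ x hx).ofReal_comp).const_mul (-I)).cexp
  have hu : ∀ x ∈ uIcc a b, HasDerivAt (fun x => I / φ' x) (-I * φ'' x / (φ' x) ^ 2) x :=
    fun x hx =>
      ((hasDerivAt_const x I).fun_div (hφ' x hx).ofReal_comp (hne' x hx)).congr_deriv (by ring)
  have hφ'cont : ContinuousOn (fun x => (φ' x : ℂ)) (uIcc a b) := fun x hx =>
    (continuous_ofReal.continuousAt.comp (hφ' x hx).continuousAt).continuousWithinAt
  have hwcont : ContinuousOn w (uIcc a b) := fun x hx =>
    (hw x hx).continuousAt.continuousWithinAt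
  have hibp := integral_mul_deriv_eq_deriv_mul hu hw
    (((continuousOn_const.mul (continuous_ofReal.comp_continuousOn hφ'')).div
      (hφ'cont.pow 2) fun x hx => pow_ne_zero 2 (hne' x hx)).intervalIntegrable)
    ((continuousOn_const.mul hφ'cont).mul hwcont).intervalIntegrable
  have hw_eq : ∀ x ∈ uIcc a b, I / φ' x * (-I * φ' x * w x) = w x := fun x hx => by
    field_simp [hne' x hx]
    simp
  have hnorm_w : ∀ x, ‖w x‖ = 1 := fun x => norm_cexp_neg_I_mul_ofReal _
  have hend : ∀ x ∈ uIcc a b, ‖I / φ' x * w x‖ ≤ U := fun x hx => by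
    simpa [hnorm_w, norm_div] using hU x hx
  have hmid : ‖∫ x in a..b, -I * φ'' x / (φ' x) ^ 2 * w x‖ ≤ V * (b - a) := by
    rw [← abs_of_nonneg (sub_nonneg.mpr hab)]
    exact intervalIntegral.norm_integral_le_of_norm_le_const fun x hx => by
      simpa [hnorm_w, norm_div, norm_mul] using hV x (uIoc_subset_uIcc hx)
  rw [← integral_congr hw_eq, hibp]
  calc _ ≤ ‖I / φ' b * w b‖ + ‖I / φ' a * w a‖
          + ‖∫ x in a..b, -I * φ'' x / (φ' x) ^ 2 * w x‖ :=
        norm_sub_le_of_le (norm_sub_le _ _) le_rfl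
    _ ≤ U + U + V * (b - a) := by
        gcongr
        exacts [hend b right_mem_uIcc, hend a left_mem_uIcc]
    _ = 2 * U + V * (b - a) := by ring

noncomputable def phaseDeriv (x α : ℝ) : ℝ :=
  -4 * α / (1 - x) ^ 3 + 2 * α / (1 - x) ^ 2 + 2 / (α * (1 - x))

noncomputable def phaseDeriv2 (x α : ℝ) : ℝ :=
  -12 * α / (1 - x) ^ 4 + 4 * α / (1 - x) ^ 3 + 2 / (α * (1 - x) ^ 2)

theorem hasDerivAt_phase {x α : ℝ} (hx : x ≠ 1) (hα : α ≠ 0) :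
    HasDerivAt (phase · α) (phaseDeriv x α) x := by
  have hs : 1 - x ≠ 0 := sub_ne_zero.mpr hx.symm
  have h1 : HasDerivAt (fun t : ℝ => 1 - t) (-1) x := by
    simpa using (hasDerivAt_id x).const_sub 1
  have h := (((hasDerivAt_const x (-2 * α)).div (h1.pow 2) (pow_ne_zero 2 hs)).add
    ((hasDerivAt_const x (2 * α)).div h1 hs)).sub
    (((Real.hasDerivAt_log hs).comp x h1).const_mul (2 / α))
  refine h.congr_deriv ?_
  simp only [phaseDeriv, Pi.pow_apply]
  field_simp
  ring

theorem hasDerivAt_phaseDeriv {x α : ℝ} (hx : x ≠ 1) (hα : α ≠ 0) :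
    HasDerivAt (phaseDeriv · α) (phaseDeriv2 x α) x := by
  have hs : 1 - x ≠ 0 := sub_ne_zero.mpr hx.symm
  have h1 : HasDerivAt (fun t : ℝ => 1 - t) (-1) x := by
    simpa using (hasDerivAt_id x).const_sub 1
  have h := (((hasDerivAt_const x (-4 * α)).div (h1.pow 3) (pow_ne_zero 3 hs)).add
    ((hasDerivAt_const x (2 * α)).div (h1.pow 2) (pow_ne_zero 2 hs))).add
    ((hasDerivAt_const x 2).div (h1.const_mul α) (mul_ne_zero hα hs))
  refine h.congr_deriv ?_
  simp only [phaseDeriv2, Pi.pow_apply]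
  field_simp
  ring

theorem le_abs_phaseDeriv {x α : ℝ} (hα : α ≠ 0) (hx : 0 < 1 - x)
    (hxα : 1 - x ≤ min (1 / 2) (|α| / 2)) : 2 * |α| / (1 - x) ^ 3 ≤ |phaseDeriv x α| := by
  obtain ⟨s, rfl⟩ : ∃ s, x = 1 - s := ⟨1 - x, by ring⟩
  rw [sub_sub_cancel] at *
  have ha : 0 < |α| := abs_pos.mpr hα
  have hs2 : s ≤ 1 / 2 := hxα.trans (min_le_left _ _)
  have hsα : s ≤ |α| / 2 := hxα.trans (min_le_right _ _)
  have hsq : α ^ 2 = |α| ^ 2 := (sq_abs α).symm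
  have hnum : |α| ^ 2 ≤ 2 * α ^ 2 - α ^ 2 * s - s ^ 2 := by nlinarith
  have hform : phaseDeriv (1 - s) α = -(2 * (2 * α ^ 2 - α ^ 2 * s - s ^ 2)) / (α * s ^ 3) := by
    simp only [phaseDeriv, sub_sub_cancel]
    field_simp
    ring
  rw [hform, abs_div, abs_neg, abs_mul, abs_mul, abs_of_pos (by positivity : (0 : ℝ) < s ^ 3),
    abs_two, abs_of_pos (by nlinarith : 0 < 2 * α ^ 2 - α ^ 2 * s - s ^ 2),
    div_le_div_iff₀ (by positivity) (by positivity)]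
  nlinarith [pow_pos hx 3]

theorem inv_abs_phaseDeriv_le {x α : ℝ} (hα : α ≠ 0) (hx : 0 < 1 - x)
    (hxα : 1 - x ≤ min (1 / 2) (|α| / 2)) :
    |phaseDeriv x α|⁻¹ ≤ (1 - x) ^ 3 / (2 * |α|) := by
  have ha : 0 < |α| := abs_pos.mpr hα
  simpa using inv_anti₀ (by positivity) (le_abs_phaseDeriv hα hx hxα)

theorem abs_phaseDeriv2_le {x α : ℝ} (hα : α ≠ 0) (hx : 0 < 1 - x) (hx1 : 1 - x ≤ 1) :
    |phaseDeriv2 x α| ≤ (16 * |α| + 2 / |α|) / (1 - x) ^ 4 := by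
  obtain ⟨s, rfl⟩ : ∃ s, x = 1 - s := ⟨1 - x, by ring⟩
  rw [sub_sub_cancel] at *
  have ha : 0 < |α| := abs_pos.mpr hα
  have h3 : s ^ 4 ≤ s ^ 3 := pow_le_pow_of_le_one hx.le hx1 (by norm_num)
  have h2 : s ^ 4 ≤ s ^ 2 := pow_le_pow_of_le_one hx.le hx1 (by norm_num)
  calc |phaseDeriv2 (1 - s) α| ≤ 12 * |α| / s ^ 4 + 4 * |α| / s ^ 3 + 2 / (|α| * s ^ 2) := by
        rw [phaseDeriv2, sub_sub_cancel]
        refine (abs_add_three _ _ _).trans ?_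
        simp only [abs_div, abs_mul, abs_neg, abs_pow, abs_of_pos hx]
        norm_num
    _ ≤ 12 * |α| / s ^ 4 + 4 * |α| / s ^ 4 + 2 / (|α| * s ^ 4) := by gcongr
    _ = (16 * |α| + 2 / |α|) / s ^ 4 := by field_simp; ring

theorem abs_phaseDeriv2_div_sq_le {x α : ℝ} (hα : α ≠ 0) (hx : 0 < 1 - x)
    (hxα : 1 - x ≤ min (1 / 2) (|α| / 2)) :
    |phaseDeriv2 x α| / phaseDeriv x α ^ 2 ≤ (4 / |α| + 1 / (2 * |α| ^ 3)) * (1 - x) ^ 2 := by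
  have ha : 0 < |α| := abs_pos.mpr hα
  have hlow := le_abs_phaseDeriv hα hx hxα
  calc |phaseDeriv2 x α| / phaseDeriv x α ^ 2
      ≤ (16 * |α| + 2 / |α|) / (1 - x) ^ 4 / (2 * |α| / (1 - x) ^ 3) ^ 2 := by
        rw [← sq_abs (phaseDeriv x α)]
        gcongr
        exact abs_phaseDeriv2_le hα hx (by linarith [hxα.trans (min_le_left _ _)])
    _ = (4 / |α| + 1 / (2 * |α| ^ 3)) * (1 - x) ^ 2 := by field_simp; ring

theorem measurable_phase (α : ℝ) : Measurable (phase · α) := by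
  unfold phase
  fun_prop

theorem IntervalIntegrable.cexp_neg_phase_mul {g : ℝ → ℂ} {a b : ℝ}
    (hg : IntervalIntegrable g volume a b) (α : ℝ) :
    IntervalIntegrable (fun x => cexp (-I * phase x α) * g x) volume a b := by
  have := measurable_phase α
  exact intervalIntegrable_iff.mpr <| (intervalIntegrable_iff.mp hg).bdd_mul
    (by fun_prop : Measurable fun x => cexp (-I * phase x α)).aestronglyMeasurable
    (ae_of_all _ fun x => (norm_cexp_neg_I_mul_ofReal _).le)

theorem norm_integral_cexp_neg_phase_le {y α : ℝ} (hα : α ≠ 0) (hy : 0 < 1 - y)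
    (hyα : 1 - y ≤ min (1 / 2) (|α| / 2)) :
    ‖∫ x in y..1, cexp (-I * phase x α)‖ ≤
      (1 + 5 / |α| + 1 / |α| ^ 3) * (1 - y) ^ 3 := by
  have ha : 0 < |α| := abs_pos.mpr hα
  have hy1 : 1 - y ≤ 1 := by linarith [hyα.trans (min_le_left _ _)]
  -- integrate by parts on `[y, b]` and bound `[b, 1]`, of length `(1 - y) ^ 3`, trivially
  set b := 1 - (1 - y) ^ 3
  have hyb : y ≤ b := by linarith [pow_le_of_le_one hy.le hy1 (by norm_num : 3 ≠ 0)]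
  have hmem : ∀ x ∈ Icc y b, 0 < 1 - x ∧ 1 - x ≤ 1 - y := fun x hx =>
    ⟨by linarith [hx.2, pow_pos hy 3], by linarith [hx.1]⟩
  have hx1 : ∀ x ∈ Icc y b, x ≠ 1 := fun x hx => by linarith [(hmem x hx).1]
  have hxα : ∀ x ∈ Icc y b, 1 - x ≤ min (1 / 2) (|α| / 2) := fun x hx =>
    (hmem x hx).2.trans hyα
  have hcont : ContinuousOn (phaseDeriv2 · α) (Icc y b) := fun x hx => by
    have hs : 1 - x ≠ 0 := (hmem x hx).1.ne'
    unfold phaseDeriv2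
    exact ContinuousAt.continuousWithinAt (by fun_prop (disch := simp [hs, hα]))
  have hhead : ‖∫ x in y..b, cexp (-I * phase x α)‖ ≤
      2 * ((1 - y) ^ 3 / (2 * |α|)) + (4 / |α| + 1 / (2 * |α| ^ 3)) * (1 - y) ^ 2 * (b - y) := by
    refine norm_integral_cexp_neg_I_mul_le hyb (fun x hx => hasDerivAt_phase (hx1 x hx) hα)
      (fun x hx => hasDerivAt_phaseDeriv (hx1 x hx) hα) hcont
      (fun x hx => ?_) (fun x hx => ?_) (fun x hx => ?_) <;> obtain ⟨h0, h1⟩ := hmem x hx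
    · exact abs_pos.mp ((by positivity : 0 < 2 * |α| / (1 - x) ^ 3).trans_le
        (le_abs_phaseDeriv hα h0 (hxα x hx)))
    · exact (inv_abs_phaseDeriv_le hα h0 (hxα x hx)).trans (by gcongr)
    · exact (abs_phaseDeriv2_div_sq_le hα h0 (hxα x hx)).trans (by gcongr)
  have htail : ‖∫ x in b..1, cexp (-I * phase x α)‖ ≤ (1 - y) ^ 3 := by
    simpa [b, abs_of_pos (pow_pos hy 3)] using
      intervalIntegral.norm_integral_le_of_norm_le_const (a := b) (b := 1) (C := 1)
        fun x _ => (norm_cexp_neg_I_mul_ofReal (phase x α)).le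
  have hint : ∀ c d : ℝ, IntervalIntegrable (fun x => cexp (-I * phase x α)) volume c d :=
    fun c d => by simpa using (intervalIntegrable_const (c := (1 : ℂ))).cexp_neg_phase_mul α
  rw [← integral_add_adjacent_intervals (hint y b) (hint b 1)]
  calc _ ≤ _ := norm_add_le _ _
    _ ≤ 2 * ((1 - y) ^ 3 / (2 * |α|)) + (4 / |α| + 1 / (2 * |α| ^ 3)) * (1 - y) ^ 2 * (b - y)
        + (1 - y) ^ 3 := add_le_add hhead htail
    _ ≤ 2 * ((1 - y) ^ 3 / (2 * |α|)) + (4 / |α| + 1 / (2 * |α| ^ 3)) * (1 - y) ^ 2 * (1 - y)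
        + (1 - y) ^ 3 := by gcongr; linarith [pow_pos hy 3]
    _ ≤ (1 + 5 / |α| + 1 / |α| ^ 3) * (1 - y) ^ 3 := by
        have : 1 / (2 * |α| ^ 3) ≤ 1 / |α| ^ 3 := by gcongr; linarith [pow_pos ha 3]
        have := pow_pos hy 3
        field_simp
        nlinarith

noncomputable def oscillatoryTransform (g : ℝ → ℂ) (p : ℝ × ℝ) : ℂ :=
  cexp (I * phase p.1 p.2) / (1 - p.1) * ∫ x in p.1..1, cexp (-I * phase x p.2) * g x

theorem oscillatoryTransform_one (g : ℝ → ℂ) (α : ℝ) :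
    oscillatoryTransform g (1, α) = 0 := by
  simp [oscillatoryTransform]

theorem continuousAt_phase {y α : ℝ} (hy : y ≠ 1) (hα : α ≠ 0) :
    ContinuousAt (fun p : ℝ × ℝ => phase p.1 p.2) (y, α) := by
  have hs : 1 - y ≠ 0 := sub_ne_zero.mpr hy.symm
  unfold phase
  fun_prop (disch := simpa)

theorem continuousAt_integral_cexp_neg_phase_mul {g : ℝ → ℂ} (hg : Continuous g) {y α : ℝ}
    (hy : y < 1) (hα : α ≠ 0) :
    ContinuousAt (fun p : ℝ × ℝ => ∫ x in p.1..1, cexp (-I * phase x p.2) * g x)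
      (y, α) := by
  have h := continuousAt_parametric_primitive_of_dominated (μ := volume)
    (F := fun β x => cexp (-I * phase x β) * g x) (fun x => ‖g x‖) (y - 1) 2 (a₀ := 1)
    (fun β => ((hg.intervalIntegrable _ _).cexp_neg_phase_mul β).def'.aestronglyMeasurable)
    (.of_forall fun β => ae_of_all _ fun x => by
      rw [norm_mul, norm_cexp_neg_I_mul_ofReal, one_mul])
    (hg.norm.intervalIntegrable _ _)
    (ae_restrict_of_ae <| (Measure.ae_ne volume 1).mono fun x hx =>
      (((continuousAt_phase hx hα).comp (f := fun β => (x, β)) (by fun_prop)).ofReal.const_mul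
        (-I) |>.cexp).mul continuousAt_const)
    ⟨by linarith, by norm_num⟩ ⟨by linarith, by linarith⟩ Real.volume_singleton
  have h' := h.neg.comp (f := Prod.swap) (x := (y, α)) continuous_swap.continuousAt
  refine h'.congr (.of_forall fun p => ?_)
  simp [integral_symm p.1]

theorem continuousAt_oscillatoryTransform {g : ℝ → ℂ} (hg : Continuous g) {y α : ℝ}
    (hy : y < 1) (hα : α ≠ 0) : ContinuousAt (oscillatoryTransform g) (y, α) := by
  have hy' : (1 : ℂ) - y ≠ 0 := by exact_mod_cast (sub_pos.mpr hy).ne'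
  refine ContinuousAt.mul ?_ (continuousAt_integral_cexp_neg_phase_mul hg hy hα)
  exact (((continuousAt_phase hy.ne hα).ofReal.const_mul I).cexp).div
    (continuousAt_const.sub (continuous_ofReal.comp continuous_fst).continuousAt) hy'

theorem norm_oscillatoryTransform_le {g : ℝ → ℂ} {y α η : ℝ}
    (hg : IntervalIntegrable g volume y 1) (hα : α ≠ 0) (hy : 0 < 1 - y)
    (hyα : 1 - y ≤ min (1 / 2) (|α| / 2)) (hη : ∀ x ∈ Icc y 1, ‖g x - g 1‖ ≤ η) :
    ‖oscillatoryTransform g (y, α)‖ ≤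
      η + (1 + 5 / |α| + 1 / |α| ^ 3) * ‖g 1‖ * (1 - y) ^ 2 := by
  have hsplit : ∫ x in y..1, cexp (-I * phase x α) * g x =
      (∫ x in y..1, cexp (-I * phase x α) * (g x - g 1)) +
        (∫ x in y..1, cexp (-I * phase x α)) * g 1 := by
    rw [← intervalIntegral.integral_mul_const, ← intervalIntegral.integral_add
      ((hg.sub intervalIntegrable_const).cexp_neg_phase_mul α)
      (by simpa using (intervalIntegrable_const (c := g 1)).cexp_neg_phase_mul α)]
    congr 1 with x
    ring
  have hnear : ‖∫ x in y..1, cexp (-I * phase x α) * (g x - g 1)‖ ≤ η * (1 - y) := by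
    refine (intervalIntegral.norm_integral_le_of_norm_le_const fun x hx => ?_).trans_eq
      (by rw [abs_of_pos hy])
    rw [norm_mul, norm_cexp_neg_I_mul_ofReal, one_mul]
    exact hη x (Ioc_subset_Icc_self (uIoc_of_le (sub_pos.mp hy).le ▸ hx))
  have hnorm : ‖oscillatoryTransform g (y, α)‖ =
      ‖∫ x in y..1, cexp (-I * phase x α) * g x‖ / (1 - y) := by
    simp [oscillatoryTransform, norm_exp, ← ofReal_one, ← ofReal_sub, abs_of_pos hy,
      div_eq_inv_mul]
  rw [hnorm, div_le_iff₀ hy, hsplit]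
  calc _ ≤ η * (1 - y) + (1 + 5 / |α| + 1 / |α| ^ 3) * (1 - y) ^ 3 * ‖g 1‖ := by
        refine (norm_add_le _ _).trans (add_le_add hnear ?_)
        rw [norm_mul]
        exact mul_le_mul_of_nonneg_right (norm_integral_cexp_neg_phase_le hα hy hyα)
          (norm_nonneg _)
    _ = _ := by ring

theorem continuousWithinAt_oscillatoryTransform_one {g : ℝ → ℂ} (hg : Continuous g) {α : ℝ}
    (hα : α ≠ 0) : ContinuousWithinAt (oscillatoryTransform g) {p | p.1 ≤ 1} (1, α) := by
  rw [ContinuousWithinAt, oscillatoryTransform_one]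
  refine NormedAddGroup.tendsto_nhds_zero.mpr fun ε hε => ?_
  obtain ⟨δ, hδ, hgδ⟩ :=
    Metric.continuousAt_iff.mp (hg.continuousAt (x := 1)) (ε / 2) (half_pos hε)
  set C : ℝ × ℝ → ℝ := fun p => (1 + 5 / |p.2| + 1 / |p.2| ^ 3) * ‖g 1‖ * (1 - p.1) ^ 2
  have hC : Tendsto C (𝓝 (1, α)) (𝓝 0) := by
    have : ContinuousAt C (1, α) := by fun_prop (disch := simpa)
    simpa [C] using this.tendsto
  have hgap : ContinuousAt (fun p : ℝ × ℝ => min (1 / 2) (|p.2| / 2) - (1 - p.1)) (1, α) := by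
    fun_prop
  have hgap_pos : (0 : ℝ) < min (1 / 2) (|α| / 2) - (1 - 1) := by
    have := abs_pos.mpr hα
    rw [sub_self, sub_zero]
    positivity
  filter_upwards [nhdsWithin_le_nhds (hC.eventually (gt_mem_nhds (half_pos hε))),
    nhdsWithin_le_nhds (hgap.eventually (lt_mem_nhds hgap_pos)),
    nhdsWithin_le_nhds (continuousAt_fst.eventually (lt_mem_nhds (by linarith : 1 - δ < 1))),
    self_mem_nhdsWithin] with ⟨y, β⟩ hCy hyβ hyδ hy1
  dsimp only [C] at hCy hyβ hyδ hy1
  rcases hy1.lt_or_eq with hy1 | rfl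
  · have hβ : β ≠ 0 := by
      rintro rfl
      simp at hyβ
      linarith
    have hη : ∀ x ∈ Icc y 1, ‖g x - g 1‖ ≤ ε / 2 := fun x hx => by
      rw [← dist_eq_norm]
      refine (hgδ ?_).le
      rw [Real.dist_eq, abs_of_nonpos (by linarith [hx.2])]
      linarith [hx.1]
    calc _ ≤ ε / 2 + (1 + 5 / |β| + 1 / |β| ^ 3) * ‖g 1‖ * (1 - y) ^ 2 :=
          norm_oscillatoryTransform_le (hg.intervalIntegrable _ _) hβ (by linarith)
            (by linarith) hη
      _ < ε := by linarith
  · simpa [oscillatoryTransform_one] using hε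

theorem oscillatory_extension_general (J : Set ℝ) (hJ0 : (0 : ℝ) ∉ J)
    (f : ℝ → ℂ) (hf : ContinuousOn f (Set.Icc 0 1)) :
    ∃ Ψ : ℝ × ℝ → ℂ, ContinuousOn Ψ (Set.Icc 0 1 ×ˢ J) ∧
      (∀ y ∈ Set.Ico (0 : ℝ) 1, ∀ α ∈ J,
        Ψ (y, α) = Complex.exp (Complex.I * (phase y α : ℂ)) / (1 - y) *
          ∫ x in y..1, Complex.exp (-Complex.I * (phase x α : ℂ)) * f x) ∧
      ∀ α ∈ J, Ψ (1, α) = 0 := by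
  set g := IccExtend zero_le_one ((Icc 0 1).domRestrict f)
  have hg : Continuous g := hf.domRestrict.Icc_extend'
  have hgf : EqOn g f (Icc 0 1) := fun x hx => IccExtend_of_mem zero_le_one _ hx
  refine ⟨oscillatoryTransform g, ?_, fun y hy α _ => ?_,
    fun α _ => oscillatoryTransform_one g α⟩
  · rintro ⟨y, α⟩ ⟨hy, hα⟩
    have hα0 : α ≠ 0 := ne_of_mem_of_not_mem hα hJ0
    rcases hy.2.lt_or_eq with hy1 | rfl
    · exact (continuousAt_oscillatoryTransform hg hy1 hα0).continuousWithinAt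
    · exact (continuousWithinAt_oscillatoryTransform_one hg hα0).mono fun p hp => hp.1.2
  · rw [oscillatoryTransform]
    congr 1
    refine integral_congr fun x hx => ?_
    rw [uIcc_of_le hy.2.le] at hx
    simp only [hgf ⟨hy.1.trans hx.1, hx.2⟩]

theorem oscillatory_extension (J : Set ℝ) (hJ : IsCompact J) (hJ0 : (0 : ℝ) ∉ J)
    (f : ℝ → ℂ) (hf : ContinuousOn f (Set.Icc 0 1)) :
    ∃ Ψ : ℝ × ℝ → ℂ, ContinuousOn Ψ (Set.Icc 0 1 ×ˢ J) ∧
      (∀ y ∈ Set.Ico (0 : ℝ) 1, ∀ α ∈ J,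
        Ψ (y, α) = Complex.exp (Complex.I * (phase y α : ℂ)) / (1 - y) *
          ∫ x in y..1, Complex.exp (-Complex.I * (phase x α : ℂ)) * f x) ∧
      ∀ α ∈ J, Ψ (1, α) = 0 :=
  oscillatory_extension_general J hJ0 f hf
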